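/- Let (Ω, 𝓕, P) be a probability space, let F : Ω → ℝ be a bounded measurable function, and let Ψ : Ω → ℝ be a measurable function with 0 ≤ Ψ ≤ 1 everywhere. Then Var(F; P) ≤ Var(F·Ψ; P) + 3·‖F‖_∞² · P({ω : Ψ(ω) ≠ 1}). -/

import Mathlib

open MeasureTheory

/-- The variance of a real-valued function `G` with respect to a measure `P`:
`Var(G; P) = ∫ G² dP − (∫ G dP)²`. -/
noncomputable def var {Ω : Type*} [MeasurableSpace Ω] (P : Measure Ω) (G : Ω → ℝ) : ℝ :=
  (∫ ω, (G ω) ^ 2 ∂P) - (∫ ω, G ω ∂P) ^ 2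

/-!
Write `M = ‖F‖_∞` and `S = {Ψ ≠ 1}`. The differences `F² - (FΨ)² = F²(1 - Ψ²)` and
`FΨ - F = F(Ψ - 1)` vanish off `S` and are bounded by `M²` and `M`, so their integrals are at
most `M² P(S)` and `M P(S)`. Hence the second moments differ by at most `M² P(S)`, and, since
the means `a = ∫ F`, `b = ∫ FΨ` lie in `[-M, M]`, `b² - a² ≤ |b - a| |b + a| ≤ M P(S) · 2M`.
-/

section Real

variable {x t M : ℝ}

lemma abs_mul_le_of_abs_le_one {s : ℝ} (hx : |x| ≤ M) (hs : |s| ≤ 1) : |x * s| ≤ M := by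
  rw [abs_mul]
  nlinarith [abs_nonneg x, abs_nonneg s]

lemma abs_mul_le_of_mem_unitInterval (hx : |x| ≤ M) (ht0 : 0 ≤ t) (ht1 : t ≤ 1) :
    |x * t| ≤ M :=
  abs_mul_le_of_abs_le_one hx (abs_le.2 ⟨by linarith, ht1⟩)

lemma abs_mul_sub_self_le (hx : |x| ≤ M) (ht0 : 0 ≤ t) (ht1 : t ≤ 1) : |x * t - x| ≤ M := by
  rw [show x * t - x = x * (t - 1) by ring]
  exact abs_mul_le_of_abs_le_one hx (abs_le.2 ⟨by linarith, by linarith⟩)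

lemma abs_sq_le_sq_of_abs_le (hx : |x| ≤ M) : |x ^ 2| ≤ M ^ 2 := by
  rw [abs_pow]
  exact pow_le_pow_left₀ (abs_nonneg x) hx 2

lemma abs_sq_sub_sq_mul_le (hx : |x| ≤ M) (ht0 : 0 ≤ t) (ht1 : t ≤ 1) :
    |x ^ 2 - (x * t) ^ 2| ≤ M ^ 2 := by
  rw [show x ^ 2 - (x * t) ^ 2 = x ^ 2 * (1 - t ^ 2) by ring]
  exact abs_mul_le_of_abs_le_one (abs_sq_le_sq_of_abs_le hx)
    (abs_le.2 ⟨by nlinarith, by nlinarith⟩)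

lemma sq_sub_sq_le_of_abs_le {a b d : ℝ} (ha : |a| ≤ M) (hb : |b| ≤ M) (hd : |b - a| ≤ d) :
    b ^ 2 - a ^ 2 ≤ 2 * M * d :=
  calc b ^ 2 - a ^ 2 = (b - a) * (b + a) := by ring
    _ ≤ |b - a| * |b + a| := by rw [← abs_mul]; exact le_abs_self _
    _ ≤ d * (2 * M) :=
      mul_le_mul hd (by linarith [abs_add_le b a]) (abs_nonneg _) ((abs_nonneg _).trans hd)
    _ = 2 * M * d := by ring

end Real

section Measure

variable {Ω : Type*} [MeasurableSpace Ω] {μ : Measure Ω}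

lemma var_sub_var {f g : Ω → ℝ} (hf : Integrable (fun ω => f ω ^ 2) μ)
    (hg : Integrable (fun ω => g ω ^ 2) μ) :
    var μ f - var μ g =
      ∫ ω, (f ω ^ 2 - g ω ^ 2) ∂μ + ((∫ ω, g ω ∂μ) ^ 2 - (∫ ω, f ω ∂μ) ^ 2) := by
  rw [var, var, integral_sub hf hg]
  ring

lemma ae_abs_le_eLpNormEssSup_toReal {f : Ω → ℝ} (hf : ∃ C : ℝ, ∀ ω, |f ω| ≤ C) :
    ∀ᵐ ω ∂μ, |f ω| ≤ (eLpNormEssSup f μ).toReal := by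
  obtain ⟨C, hC⟩ := hf
  have hfin : eLpNormEssSup f μ ≠ ⊤ :=
    ne_top_of_le_ne_top ENNReal.ofReal_ne_top
      (eLpNormEssSup_le_of_ae_bound (C := C) (ae_of_all _ hC))
  filter_upwards [ae_le_eLpNormEssSup (f := f) (μ := μ)] with ω hω
  simpa only [Real.enorm_eq_ofReal_abs, ENNReal.toReal_ofReal (abs_nonneg _)]
    using ENNReal.toReal_mono hfin hω

variable [IsFiniteMeasure μ] {f : Ω → ℝ} {C : ℝ}

lemma integrable_of_ae_abs_le (hf : Measurable f) (hC : ∀ᵐ ω ∂μ, |f ω| ≤ C) :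
    Integrable f μ :=
  Integrable.of_bound hf.aestronglyMeasurable C (by simpa only [Real.norm_eq_abs] using hC)

lemma integrable_sq_of_ae_abs_le (hf : Measurable f) (hC : ∀ᵐ ω ∂μ, |f ω| ≤ C) :
    Integrable (fun ω => f ω ^ 2) μ :=
  integrable_of_ae_abs_le (hf.pow_const 2) (hC.mono fun _ => abs_sq_le_sq_of_abs_le)

lemma abs_integral_le_of_ae_abs_le [IsProbabilityMeasure μ] (hC : ∀ᵐ ω ∂μ, |f ω| ≤ C) :
    |∫ ω, f ω ∂μ| ≤ C := by
  simpa using norm_integral_le_of_norm_le_const (f := f) (μ := μ)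
    (by simpa only [Real.norm_eq_abs] using hC)

lemma abs_integral_le_mul_measureReal_of_eq_zero_off {s : Set Ω} (hf : ∀ ω ∉ s, f ω = 0)
    (hC : ∀ᵐ ω ∂μ, |f ω| ≤ C) : |∫ ω, f ω ∂μ| ≤ C * μ.real s := by
  rw [← setIntegral_eq_integral_of_forall_compl_eq_zero hf]
  exact norm_setIntegral_le_of_norm_le_const_ae' (measure_lt_top μ s)
    (hC.mono fun ω hω _ => (Real.norm_eq_abs _).trans_le hω)

variable {F Ψ : Ω → ℝ} {M : ℝ}

lemma abs_integral_sq_sub_sq_mul_le (hFM : ∀ᵐ ω ∂μ, |F ω| ≤ M) (hΨ0 : ∀ ω, 0 ≤ Ψ ω)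
    (hΨ1 : ∀ ω, Ψ ω ≤ 1) :
    |∫ ω, F ω ^ 2 - (F ω * Ψ ω) ^ 2 ∂μ| ≤ M ^ 2 * μ.real {ω | Ψ ω ≠ 1} :=
  abs_integral_le_mul_measureReal_of_eq_zero_off (by simp +contextual)
    (hFM.mono fun ω h => abs_sq_sub_sq_mul_le h (hΨ0 ω) (hΨ1 ω))

lemma abs_integral_mul_sub_integral_le (hF : Measurable F) (hΨ : Measurable Ψ)
    (hFM : ∀ᵐ ω ∂μ, |F ω| ≤ M) (hΨ0 : ∀ ω, 0 ≤ Ψ ω) (hΨ1 : ∀ ω, Ψ ω ≤ 1) :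
    |∫ ω, F ω * Ψ ω ∂μ - ∫ ω, F ω ∂μ| ≤ M * μ.real {ω | Ψ ω ≠ 1} := by
  have hFΨ : Integrable (fun ω => F ω * Ψ ω) μ := integrable_of_ae_abs_le (hF.mul hΨ)
    (hFM.mono fun ω h => abs_mul_le_of_mem_unitInterval h (hΨ0 ω) (hΨ1 ω))
  rw [← integral_sub hFΨ (integrable_of_ae_abs_le hF hFM)]
  exact abs_integral_le_mul_measureReal_of_eq_zero_off (by simp +contextual)
    (hFM.mono fun ω h => abs_mul_sub_self_le h (hΨ0 ω) (hΨ1 ω))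

end Measure

/-- Cut-off estimate: if `F` is bounded measurable and `Ψ` is measurable with `0 ≤ Ψ ≤ 1`,
then `Var(F; P) ≤ Var(F·Ψ; P) + 3‖F‖_∞² · P(Ψ ≠ 1)`. -/
theorem variance_cutoff {Ω : Type*} [MeasurableSpace Ω] (P : Measure Ω)
    [IsProbabilityMeasure P] (F Ψ : Ω → ℝ)
    (hF : Measurable F) (hFbdd : ∃ C : ℝ, ∀ ω, |F ω| ≤ C)
    (hΨ : Measurable Ψ) (hΨ0 : ∀ ω, 0 ≤ Ψ ω) (hΨ1 : ∀ ω, Ψ ω ≤ 1) :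
    var P F ≤ var P (fun ω => F ω * Ψ ω)
      + 3 * (eLpNormEssSup F P).toReal ^ 2 * (P {ω | Ψ ω ≠ 1}).toReal := by
  set M := (eLpNormEssSup F P).toReal
  have hFM : ∀ᵐ ω ∂P, |F ω| ≤ M := ae_abs_le_eLpNormEssSup_toReal hFbdd
  have hFΨM : ∀ᵐ ω ∂P, |F ω * Ψ ω| ≤ M :=
    hFM.mono fun ω h => abs_mul_le_of_mem_unitInterval h (hΨ0 ω) (hΨ1 ω)
  have hsplit := var_sub_var (integrable_sq_of_ae_abs_le hF hFM)
    (integrable_sq_of_ae_abs_le (f := fun ω => F ω * Ψ ω) (hF.mul hΨ) hFΨM)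
  have hsecond := abs_integral_sq_sub_sq_mul_le hFM hΨ0 hΨ1
  have hmeans := sq_sub_sq_le_of_abs_le (abs_integral_le_of_ae_abs_le hFM)
    (abs_integral_le_of_ae_abs_le hFΨM) (abs_integral_mul_sub_integral_le hF hΨ hFM hΨ0 hΨ1)
  rw [Measure.real] at hsecond hmeans
  nlinarith [le_abs_self (∫ ω, F ω ^ 2 - (F ω * Ψ ω) ^ 2 ∂P)]
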